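/- Let A, B, X be bounded linear operators on a complex Hilbert space H with A and B self-adjoint, let m > 0 be a real number, and suppose X − mI is a positive operator (i.e., X ≥ mI > 0). Then m‖A − B‖ ≤ w(AX − XB) ≤ ‖AX − XB‖, where w denotes the numerical radius. -/

import Mathlib

/-- The numerical radius of a bounded linear operator. -/
noncomputable def numRadius {E : Type*} [NormedAddCommGroup E] [InnerProductSpace ℂ E]
    (T : E →L[ℂ] E) : ℝ :=
  ⨆ x : {x : E // ‖x‖ = 1}, ‖(inner ℂ (T x.val) x.val : ℂ)‖

/-!
With `D = A - B`, the real part of `⟪(A X - X B) x, x⟫` equals `re ⟪X x, D x⟫`. For a unit vector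
`x` and `λ = re ⟪D x, x⟫`, the residual `D x - λ x` has norm at most `√(‖D‖² - λ²)`, so
`re ⟪X x, D x⟫` is close to `λ re ⟪X x, x⟫`, whose modulus is at least `m |λ|`. As `D` is
self-adjoint, `‖D‖` is the supremum of such `|λ|`, and letting `|λ| → ‖D‖` gives `m ‖D‖ ≤ w`.
-/

open RCLike

namespace ContinuousLinearMap

variable {𝕜 E : Type*} [RCLike 𝕜] [NormedAddCommGroup E] [InnerProductSpace 𝕜 E]

local notation "⟪" x ", " y "⟫" => inner 𝕜 x y

theorem IsPositive.isSymmetric_of_sub_smul_one {X : E →L[𝕜] E} {m : ℝ}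
    (hX : (X - (m : 𝕜) • 1).IsPositive) : (X : E →ₗ[𝕜] E).IsSymmetric := by
  simpa using hX.isSymmetric.add (LinearMap.IsSymmetric.one.smul (conj_ofReal m))

theorem IsPositive.mul_norm_sq_le_re_inner_of_sub_smul_one {X : E →L[𝕜] E} {m : ℝ}
    (hX : (X - (m : 𝕜) • 1).IsPositive) (x : E) : m * ‖x‖ ^ 2 ≤ re ⟪X x, x⟫ := by
  simpa [inner_sub_left, inner_smul_left] using hX.re_inner_nonneg_left x

theorem re_inner_mul_sub_mul_apply_self {A X : E →L[𝕜] E} (hA : (A : E →ₗ[𝕜] E).IsSymmetric)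
    (hX : (X : E →ₗ[𝕜] E).IsSymmetric) (B : E →L[𝕜] E) (x : E) :
    re ⟪(A * X - X * B) x, x⟫ = re ⟪X x, (A - B) x⟫ := by
  rw [sub_apply, mul_apply_eq_comp, mul_apply_eq_comp, inner_sub_left, hA.apply_clm (X x),
    hX.apply_clm (B x), sub_apply, inner_sub_right, map_sub, map_sub, inner_re_symm (B x)]

theorem norm_sub_re_inner_smul_sq (T : E →L[𝕜] E) {x : E} (hx : ‖x‖ = 1) :
    ‖T x - (re ⟪T x, x⟫ : 𝕜) • x‖ ^ 2 = ‖T x‖ ^ 2 - re ⟪T x, x⟫ ^ 2 := by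
  rw [norm_sub_sq (𝕜 := 𝕜), inner_smul_right, re_ofReal_mul, norm_smul, hx]
  simp only [norm_algebraMap', Real.norm_eq_abs, mul_one, sq_abs]
  ring

theorem norm_sub_re_inner_smul_le (T : E →L[𝕜] E) {x : E} (hx : ‖x‖ = 1) :
    ‖T x - (re ⟪T x, x⟫ : 𝕜) • x‖ ≤ √(‖T‖ ^ 2 - re ⟪T x, x⟫ ^ 2) := by
  refine Real.le_sqrt_of_sq_le ?_
  rw [norm_sub_re_inner_smul_sq T hx]
  have : ‖T x‖ ≤ ‖T‖ := by simpa [hx] using T.le_opNorm x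
  gcongr

theorem mul_abs_re_inner_le (D X : E →L[𝕜] E) {m : ℝ} {x : E} (hx : ‖x‖ = 1)
    (hm : m ≤ re ⟪X x, x⟫) :
    m * |re ⟪D x, x⟫| ≤ |re ⟪X x, D x⟫| + ‖X‖ * √(‖D‖ ^ 2 - re ⟪D x, x⟫ ^ 2) := by
  set l := re ⟪D x, x⟫
  set r := D x - (l : 𝕜) • x
  have hsplit : re ⟪X x, D x⟫ = l * re ⟪X x, x⟫ + re ⟪X x, r⟫ := by
    simp [r, inner_sub_right, inner_smul_right]
  have hXx : ‖X x‖ ≤ ‖X‖ := by simpa [hx] using X.le_opNorm x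
  calc m * |l| ≤ |l * re ⟪X x, x⟫| := by
        rw [abs_mul, mul_comm]; gcongr; exact hm.trans (le_abs_self _)
    _ ≤ |re ⟪X x, D x⟫| + |re ⟪X x, r⟫| := by
        simpa [hsplit] using abs_sub (re ⟪X x, D x⟫) (re ⟪X x, r⟫)
    _ ≤ |re ⟪X x, D x⟫| + ‖X‖ * √(‖D‖ ^ 2 - l ^ 2) := by
        gcongr
        calc |re ⟪X x, r⟫| ≤ ‖X x‖ * ‖r‖ := (abs_re_le_norm _).trans (norm_inner_le_norm _ _)
          _ ≤ ‖X‖ * √(‖D‖ ^ 2 - l ^ 2) := by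
            gcongr; exact D.norm_sub_re_inner_smul_le hx

theorem mul_norm_le_of_abs_re_inner_le {D X : E →L[𝕜] E} (hD : (D : E →ₗ[𝕜] E).IsSymmetric)
    {m c : ℝ} (hc : 0 ≤ c) (hX : ∀ x, ‖x‖ = 1 → m ≤ re ⟪X x, x⟫)
    (hDX : ∀ x, ‖x‖ = 1 → |re ⟪X x, D x⟫| ≤ c) :
    m * ‖D‖ ≤ c := by
  -- `f |λ| ≤ c` for every Rayleigh quotient `λ`; they accumulate at `‖D‖`, and `f ‖D‖ = m * ‖D‖`.
  set f : ℝ → ℝ := fun t ↦ m * t - ‖X‖ * √(‖D‖ ^ 2 - t ^ 2)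
  have hf : Continuous f := by fun_prop
  have hle : ∀ x, f |D.rayleighQuotient x| ≤ c := by
    intro x
    rcases eq_or_ne x 0 with rfl | hx
    · simpa [f] using (neg_nonpos.2 (by positivity : 0 ≤ ‖X‖ * ‖D‖)).trans hc
    obtain ⟨u, hu, hux⟩ : D.rayleighQuotient x ∈ D.rayleighQuotient '' Metric.sphere 0 1 := by
      rw [← D.image_rayleigh_eq_image_rayleigh_sphere one_pos]; exact ⟨x, hx, rfl⟩
    rw [mem_sphere_zero_iff_norm] at hu
    rw [← hux]
    simp only [f, rayleighQuotient, reApplyInnerSelf_apply, hu, one_pow, div_one, sq_abs]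
    linarith [mul_abs_re_inner_le D X hu (hX u hu), hDX u hu]
  have hnorm : ‖D‖ ∈ closure (Set.range fun x ↦ |D.rayleighQuotient x|) := by
    rw [D.norm_eq_iSup_rayleighQuotient hD]
    exact csSup_mem_closure (Set.range_nonempty _) D.bddAbove_rayleighQuotient
  have := closure_minimal (Set.range_subset_iff.2 hle) (isClosed_le hf continuous_const) hnorm
  simpa [f] using this

end ContinuousLinearMap

open ContinuousLinearMap

section NumericalRadius

variable {H : Type*} [NormedAddCommGroup H] [InnerProductSpace ℂ H]

theorem norm_inner_apply_self_le_opNorm (T : H →L[ℂ] H) {x : H} (hx : ‖x‖ = 1) :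
    ‖inner ℂ (T x) x‖ ≤ ‖T‖ := by
  simpa [hx] using (norm_inner_le_norm (T x) x).trans
    (mul_le_mul_of_nonneg_right (T.le_opNorm x) (norm_nonneg x))

theorem norm_inner_apply_self_le_numRadius (T : H →L[ℂ] H) {x : H} (hx : ‖x‖ = 1) :
    ‖inner ℂ (T x) x‖ ≤ numRadius T :=
  le_ciSup (f := fun x : {x : H // ‖x‖ = 1} ↦ ‖inner ℂ (T x) x‖)
    ⟨‖T‖, by rintro _ ⟨y, rfl⟩; exact norm_inner_apply_self_le_opNorm T y.2⟩ ⟨x, hx⟩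

theorem numRadius_nonneg (T : H →L[ℂ] H) : 0 ≤ numRadius T :=
  Real.iSup_nonneg fun _ ↦ norm_nonneg _

theorem numRadius_le_opNorm (T : H →L[ℂ] H) : numRadius T ≤ ‖T‖ :=
  Real.iSup_le (fun x ↦ norm_inner_apply_self_le_opNorm T x.2) (norm_nonneg T)

end NumericalRadius

theorem stmt_10_general {H : Type*} [NormedAddCommGroup H] [InnerProductSpace ℂ H] [CompleteSpace H]
    (A B X : H →L[ℂ] H) (hA : IsSelfAdjoint A) (hB : IsSelfAdjoint B)
    (m : ℝ)
    (hX : (X - (m : ℂ) • (1 : H →L[ℂ] H)).IsPositive) :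
    m * ‖A - B‖ ≤ numRadius (A * X - X * B) ∧ numRadius (A * X - X * B) ≤ ‖A * X - X * B‖ := by
  refine ⟨?_, numRadius_le_opNorm _⟩
  refine mul_norm_le_of_abs_re_inner_le (isSelfAdjoint_iff_isSymmetric.1 (hA.sub hB))
    (numRadius_nonneg _)
    (fun x hx ↦ by simpa [hx] using hX.mul_norm_sq_le_re_inner_of_sub_smul_one x)
    fun x hx ↦ ?_
  rw [← re_inner_mul_sub_mul_apply_self (isSelfAdjoint_iff_isSymmetric.1 hA)
    hX.isSymmetric_of_sub_smul_one]
  exact (abs_re_le_norm _).trans (norm_inner_apply_self_le_numRadius _ hx)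

theorem stmt_10 {H : Type*} [NormedAddCommGroup H] [InnerProductSpace ℂ H] [CompleteSpace H]
    (A B X : H →L[ℂ] H) (hA : IsSelfAdjoint A) (hB : IsSelfAdjoint B)
    (m : ℝ) (hm : 0 < m)
    (hX : (X - (m : ℂ) • (1 : H →L[ℂ] H)).IsPositive) :
    m * ‖A - B‖ ≤ numRadius (A * X - X * B) ∧ numRadius (A * X - X * B) ≤ ‖A * X - X * B‖ :=
  stmt_10_general A B X hA hB m hX
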